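/- (Fact I, first part) Suppose |f(x) - f(x*) - F(x - x*)| ≤ L|x - x*| for all x ∈ [0, a] with |x - x*| ≤ η, and f(x*) = u* + v*. Define V(x, w) = |x - x*| + M|w + v* - f(x) + (1-g)(x - x*)| with M ≥ 1. If V(x, w) ≤ min(η, min(b_max - u*, u* - b_min) / max(|1-σ|/M, L + |k₂ + (1-σ)(1-g) - F|)), then b_min ≤ (1-σ)w - σv* + σf(x) - k₂(x - x*) ≤ b_max. -/
import Mathlib


theorem fact_I_first_part
    (a bmin bmax xstar ustar vstar η F L g M σ k₂ : ℝ)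
    (ha : 0 < a) (hbmin : 0 ≤ bmin) (hb : bmin < bmax)
    (hxstar : xstar ∈ Set.Ioo 0 a) (hustar : ustar ∈ Set.Ioo bmin bmax)
    (hvstar : 0 ≤ vstar) (hη : 0 < η) (hL : 0 < L) (hM : 1 ≤ M)
    (f : ℝ → ℝ) (hfc : ContinuousOn f (Set.Icc 0 a))
    (hfeq : f xstar = ustar + vstar)
    (hsector : ∀ x ∈ Set.Icc (0:ℝ) a, |x - xstar| ≤ η →
      |f x - f xstar - F * (x - xstar)| ≤ L * |x - xstar|)
    (x w : ℝ) (hx : x ∈ Set.Icc (0:ℝ) a)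
    (hV : |x - xstar| + M * |w + vstar - f x + (1 - g) * (x - xstar)| ≤
      min η (min (bmax - ustar) (ustar - bmin) /
        max (|1 - σ| / M) (L + |k₂ + (1 - σ) * (1 - g) - F|))) :
    bmin ≤ (1 - σ) * w - σ * vstar + σ * f x - k₂ * (x - xstar) ∧
    (1 - σ) * w - σ * vstar + σ * f x - k₂ * (x - xstar) ≤ bmax := by
  have hM0 : (0:ℝ) < M := lt_of_lt_of_le one_pos hM
  set e := x - xstar with he
  set δ := w + vstar - f x + (1 - g) * e with hδ
  set c := min (bmax - ustar) (ustar - bmin) with hc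
  set A := |k₂ + (1 - σ) * (1 - g) - F| with hA
  set D := max (|1 - σ| / M) (L + A) with hD
  have hA0 : 0 ≤ A := abs_nonneg _
  have hcpos : 0 < c := lt_min (by linarith [hustar.2]) (by linarith [hustar.1])
  have hDpos : 0 < D := lt_of_lt_of_le (by linarith) (le_max_right _ _)
  have hVη : |e| + M * |δ| ≤ η := le_trans hV (min_le_left _ _)
  have hVc : |e| + M * |δ| ≤ c / D := le_trans hV (min_le_right _ _)
  have hVc' : D * (|e| + M * |δ|) ≤ c := by
    rw [← le_div_iff₀' hDpos]; exact hVc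
  have heη : |e| ≤ η := by nlinarith [abs_nonneg δ]
  have hsec := hsector x hx heη
  have h1 : (1 - σ) * w - σ * vstar + σ * f x - k₂ * e - ustar
      = (1 - σ) * δ + (f x - f xstar - F * e) + (F - (1 - σ) * (1 - g) - k₂) * e := by
    rw [hδ, hfeq]; ring
  have b1 : |(1 - σ) * δ| ≤ D * M * |δ| := by
    rw [abs_mul]
    have h1σ : |1 - σ| ≤ D * M := by
      have := le_max_left (|1 - σ| / M) (L + A)
      rw [div_le_iff₀ hM0] at this
      linarith
    nlinarith [abs_nonneg δ]
  have b3 : |(F - (1 - σ) * (1 - g) - k₂) * e| = A * |e| := by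
    rw [abs_mul, hA, ← abs_neg (k₂ + (1 - σ) * (1 - g) - F)]
    ring_nf
  have hLA : L + A ≤ D := le_max_right _ _
  have key : |(1 - σ) * w - σ * vstar + σ * f x - k₂ * e - ustar| ≤ c := by
    calc |(1 - σ) * w - σ * vstar + σ * f x - k₂ * e - ustar|
        = |(1 - σ) * δ + (f x - f xstar - F * e) + (F - (1 - σ) * (1 - g) - k₂) * e| := by
          rw [h1]
      _ ≤ |(1 - σ) * δ| + |f x - f xstar - F * e| + |(F - (1 - σ) * (1 - g) - k₂) * e| :=
          (abs_add_le _ _).trans (by gcongr; exact abs_add_le _ _)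
      _ ≤ c := by
          rw [b3]
          nlinarith [abs_nonneg e, abs_nonneg δ]
  rcases abs_le.mp key with ⟨k1, k2⟩
  have hc1 : c ≤ bmax - ustar := min_le_left _ _
  have hc2 : c ≤ ustar - bmin := min_le_right _ _
  constructor <;> linarith
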